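/- In a connected graded bialgebra, define u₀ = η∘ε and u_{k+1} = (η∘ε − id) ∗ u_k. Then u_k(a) = 0 for every homogeneous element a with k > deg(a). -/
import Mathlib


open TensorProduct

variable {k H : Type*} [Field k] [Ring H] [Bialgebra k H]

/-- The degree-`n` part of `H ⊗ H` induced by a grading on `H`. -/
noncomputable def tensorPiece (ℬ : ℕ → Submodule k H) (n : ℕ) : Submodule k (H ⊗[k] H) :=
  ⨆ pq : {pq : ℕ × ℕ // pq.1 + pq.2 = n},
    LinearMap.range (TensorProduct.map (ℬ pq.1.1).subtype (ℬ pq.1.2).subtype)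

/-- The convolution product on linear endomorphisms of a bialgebra. -/
noncomputable def conv (f g : H →ₗ[k] H) : H →ₗ[k] H :=
  LinearMap.mul' k H ∘ₗ TensorProduct.map f g ∘ₗ Coalgebra.comul

/-- The unit of convolution: `η ∘ ε`. -/
noncomputable def convUnit : H →ₗ[k] H :=
  Algebra.linearMap k H ∘ₗ Coalgebra.counit

/-- The sequence `u₀ = η∘ε`, `u_{q+1} = (η∘ε − id) ∗ u_q`. -/
noncomputable def uSeq : ℕ → (H →ₗ[k] H)
  | 0 => convUnit
  | q + 1 => conv (convUnit - LinearMap.id) (uSeq q)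

/-- In a connected graded bialgebra, `u_q(a) = 0` for every homogeneous `a`
with `q > deg(a)`. -/
theorem stmt10 (ℬ : ℕ → Submodule k H)
    (hinternal : DirectSum.IsInternal ℬ)
    (hconn : ℬ 0 = Submodule.span k {(1 : H)})
    (hmul : ∀ m n : ℕ, ∀ a ∈ ℬ m, ∀ b ∈ ℬ n, a * b ∈ ℬ (m + n))
    (hcomul : ∀ n : ℕ, ∀ a ∈ ℬ n, Coalgebra.comul a ∈ tensorPiece ℬ n) :
    ∀ (q n : ℕ), n < q → ∀ a ∈ ℬ n, uSeq (k := k) (H := H) q a = 0 := by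
  set P : H →ₗ[k] H := convUnit - LinearMap.id with hP
  have hP0 : ∀ x ∈ ℬ 0, P x = 0 := by
    intro x hx
    rw [hconn, Submodule.mem_span_singleton] at hx
    obtain ⟨c, rfl⟩ := hx
    have h1 : P (1 : H) = 0 := by
      simp [hP, convUnit, Bialgebra.counit_one]
    rw [map_smul, h1, smul_zero]
  intro q
  induction q with
  | zero => intro n hn; omega
  | succ q ih =>
    intro n hn a ha
    have hn' : n ≤ q := Nat.lt_succ_iff.mp hn
    show conv P (uSeq q) a = 0
    rw [conv, LinearMap.comp_apply, LinearMap.comp_apply]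
    have hkey : TensorProduct.map P (uSeq (k := k) (H := H) q)
        (Coalgebra.comul a) = 0 := by
      have hmem := hcomul n a ha
      refine (LinearMap.mem_ker).mp (?_ : Coalgebra.comul a ∈ LinearMap.ker _)
      refine (iSup_le ?_ : tensorPiece ℬ n ≤ _) hmem
      rintro ⟨⟨p, r⟩, hpr⟩ x ⟨y, rfl⟩
      simp only [LinearMap.mem_ker]
      induction y using TensorProduct.induction_on with
      | zero => simp
      | tmul b c =>
        simp only [TensorProduct.map_tmul, Submodule.coe_subtype]
        rcases Nat.eq_zero_or_pos p with hp | hp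
        · rw [hP0 b (hp ▸ b.2), TensorProduct.zero_tmul]
        · have hr : r < q := by omega
          rw [ih r hr c c.2, TensorProduct.tmul_zero]
      | add y z hy hz =>
        simp only [map_add, hy, hz, add_zero]
    rw [hkey, map_zero]
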